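/- arXiv:1711.02400 — 2 statements merged into one kernel-verified Lean document; each statement's English description precedes it below -/
import Mathlib

section
/- Let Φ : Ω₀ → ℝ be continuous on the exterior domain Ω₀ = {x ∈ ℝ² : |x| ≥ R₀} and satisfy the maximum principle on bounded annular subdomains: for all R₀ ≤ R₁ < R₂, sup over the closed annulus {R₁ ≤ |x| ≤ R₂} of Φ equals the sup of Φ over the two boundary circles. If there is a sequence of points x_k with |x_k| → ∞ and Φ(x_k) → +∞, and a sequence of radii R_m → ∞ with sup_{C_{R_m}} Φ − inf_{C_{R_m}} Φ → 0, then inf_{C_{R_m}} Φ → +∞. -/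
open Real MeasureTheory Filter Topology

/-! A bad circle `C_R` (one with `sup_{C_R} Φ < b`) cannot lie on each side of a point `y` with
`Φ y ≥ b`, since by the maximum principle `Φ < b` on the annulus between the two circles.
As `Φ` exceeds any bound at points arbitrarily far out, the bad radii are bounded, so
`sup_{C_R} Φ → ∞` as `R → ∞`; on the good circles the infimum then follows the supremum. -/

section Annulus

variable {E : Type*} [NormedAddCommGroup E]

def annulus (R₁ R₂ : ℝ) : Set E := {x | R₁ ≤ ‖x‖ ∧ ‖x‖ ≤ R₂}

theorem isCompact_annulus [ProperSpace E] (R₁ R₂ : ℝ) : IsCompact (annulus R₁ R₂ : Set E) := by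
  refine (isCompact_closedBall (0 : E) R₂).of_isClosed_subset ?_ fun y hy => ?_
  · exact (isClosed_le continuous_const continuous_norm).inter
      (isClosed_le continuous_norm continuous_const)
  · simpa using hy.2

theorem sphere_subset_annulus {R₁ R R₂ : ℝ} (h₁ : R₁ ≤ R) (h₂ : R ≤ R₂) :
    Metric.sphere (0 : E) R ⊆ annulus R₁ R₂ := fun z hz => by
  rw [mem_sphere_zero_iff_norm] at hz
  exact ⟨hz ▸ h₁, hz ▸ h₂⟩

variable [NormedSpace ℝ E] [ProperSpace E] [Nontrivial E] {Φ : E → ℝ}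

theorem le_max_sSup_image_sphere_of_mem_annulus {R₁ R₂ : ℝ}
    (hcont : ContinuousOn Φ (annulus R₁ R₂))
    (hmax : sSup (Φ '' annulus R₁ R₂) =
      sSup (Φ '' (Metric.sphere 0 R₁ ∪ Metric.sphere 0 R₂)))
    {y : E} (hy : y ∈ annulus R₁ R₂) :
    Φ y ≤ max (sSup (Φ '' Metric.sphere 0 R₁)) (sSup (Φ '' Metric.sphere 0 R₂)) := by
  have hbdd : BddAbove (Φ '' annulus R₁ R₂) :=
    ((isCompact_annulus R₁ R₂).image_of_continuousOn hcont).bddAbove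
  have hle_sSup : ∀ R, R₁ ≤ R → R ≤ R₂ → ∀ z ∈ Metric.sphere (0 : E) R,
      Φ z ≤ sSup (Φ '' Metric.sphere 0 R) := fun R h₁ h₂ z hz =>
    le_csSup (hbdd.mono (Set.image_mono (sphere_subset_annulus h₁ h₂))) ⟨z, hz, rfl⟩
  have hR : R₁ ≤ R₂ := hy.1.trans hy.2
  have hne : (Φ '' (Metric.sphere 0 R₁ ∪ Metric.sphere 0 R₂)).Nonempty :=
    ((NormedSpace.sphere_nonempty.2 ((norm_nonneg y).trans hy.2)).mono
      Set.subset_union_right).image Φ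
  calc Φ y ≤ sSup (Φ '' annulus R₁ R₂) := le_csSup hbdd ⟨y, hy, rfl⟩
    _ = sSup (Φ '' (Metric.sphere 0 R₁ ∪ Metric.sphere 0 R₂)) := hmax
    _ ≤ _ := by
      refine csSup_le hne ?_
      rintro _ ⟨z, hz | hz, rfl⟩
      · exact le_max_of_le_left (hle_sSup R₁ le_rfl hR z hz)
      · exact le_max_of_le_right (hle_sSup R₂ hR le_rfl z hz)

theorem tendsto_sSup_image_sphere_atTop {R₀ : ℝ}
    (hcont : ContinuousOn Φ {x | R₀ ≤ ‖x‖})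
    (hmax : ∀ R₁ R₂ : ℝ, R₀ ≤ R₁ → R₁ < R₂ →
      sSup (Φ '' annulus R₁ R₂) = sSup (Φ '' (Metric.sphere 0 R₁ ∪ Metric.sphere 0 R₂)))
    {ι : Type*} {l : Filter ι} [l.NeBot] {x : ι → E}
    (hx_norm : Tendsto (fun k => ‖x k‖) l atTop) (hx : Tendsto (fun k => Φ (x k)) l atTop) :
    Tendsto (fun R => sSup (Φ '' Metric.sphere 0 R)) atTop atTop := by
  refine tendsto_atTop.2 fun b => ?_
  by_contra hbad
  simp only [not_eventually, not_le] at hbad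
  obtain ⟨R₁, hR₁b, hR₀R₁⟩ := (hbad.and_eventually (eventually_ge_atTop R₀)).exists
  obtain ⟨k, hk_norm, hk⟩ :=
    ((hx_norm.eventually_gt_atTop R₁).and (hx.eventually_ge_atTop b)).exists
  obtain ⟨R₂, hR₂b, hkR₂⟩ := (hbad.and_eventually (eventually_gt_atTop ‖x k‖)).exists
  have hsub : annulus R₁ R₂ ⊆ {x : E | R₀ ≤ ‖x‖} := fun y hy => hR₀R₁.trans hy.1
  have := le_max_sSup_image_sphere_of_mem_annulus (hcont.mono hsub)
    (hmax R₁ R₂ hR₀R₁ (hk_norm.trans hkR₂)) ⟨hk_norm.le, hkR₂.le⟩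
  exact (this.trans_lt (max_lt hR₁b hR₂b)).not_ge hk

end Annulus

theorem stmt_3_general (Φ : ℝ × ℝ → ℝ) (R₀ : ℝ)
    (hcont : ContinuousOn Φ {x : ℝ × ℝ | R₀ ≤ ‖x‖})
    (hmax : ∀ R₁ R₂ : ℝ, R₀ ≤ R₁ → R₁ < R₂ →
      sSup (Φ '' {x : ℝ × ℝ | R₁ ≤ ‖x‖ ∧ ‖x‖ ≤ R₂}) =
      sSup (Φ '' (Metric.sphere (0:ℝ×ℝ) R₁ ∪ Metric.sphere (0:ℝ×ℝ) R₂)))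
    (x : ℕ → ℝ × ℝ)
    (hx1 : Tendsto (fun k => ‖x k‖) atTop atTop)
    (hx2 : Tendsto (fun k => Φ (x k)) atTop atTop)
    (Rm : ℕ → ℝ)
    (hRm : Tendsto Rm atTop atTop)
    (hosc : Tendsto (fun m =>
        sSup (Φ '' Metric.sphere (0:ℝ×ℝ) (Rm m)) -
        sInf (Φ '' Metric.sphere (0:ℝ×ℝ) (Rm m))) atTop (𝓝 0)) :
    Tendsto (fun m => sInf (Φ '' Metric.sphere (0:ℝ×ℝ) (Rm m))) atTop atTop := by
  have hsup := (tendsto_sSup_image_sphere_atTop hcont hmax hx1 hx2).comp hRm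
  simpa using hsup.atTop_add hosc.neg

theorem stmt_3 (Φ : ℝ × ℝ → ℝ) (R₀ : ℝ) (hR₀ : 0 < R₀)
    (hcont : ContinuousOn Φ {x : ℝ × ℝ | R₀ ≤ ‖x‖})
    (hmax : ∀ R₁ R₂ : ℝ, R₀ ≤ R₁ → R₁ < R₂ →
      sSup (Φ '' {x : ℝ × ℝ | R₁ ≤ ‖x‖ ∧ ‖x‖ ≤ R₂}) =
      sSup (Φ '' (Metric.sphere (0:ℝ×ℝ) R₁ ∪ Metric.sphere (0:ℝ×ℝ) R₂)))
    (x : ℕ → ℝ × ℝ) (hxin : ∀ k, R₀ ≤ ‖x k‖)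
    (hx1 : Tendsto (fun k => ‖x k‖) atTop atTop)
    (hx2 : Tendsto (fun k => Φ (x k)) atTop atTop)
    (Rm : ℕ → ℝ) (hRm0 : ∀ m, R₀ ≤ Rm m)
    (hRm : Tendsto Rm atTop atTop)
    (hosc : Tendsto (fun m =>
        sSup (Φ '' Metric.sphere (0:ℝ×ℝ) (Rm m)) -
        sInf (Φ '' Metric.sphere (0:ℝ×ℝ) (Rm m))) atTop (𝓝 0)) :
    Tendsto (fun m => sInf (Φ '' Metric.sphere (0:ℝ×ℝ) (Rm m))) atTop atTop :=
  stmt_3_general Φ R₀ hcont hmax x hx1 hx2 Rm hRm hosc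
end

section
/- Let (u, p) be a smooth solution on an open set U ⊂ ℝ² of −ν Δu + (u·∇)u + ∇p = 0, div u = 0, with Φ = p + ½|u|² and ω = ∂₁u₂ − ∂₂u₁. Then ΔΦ = ω² + (1/ν) div(Φ u) holds on U. -/
/-
Writing the convection term in Lamb form, `(u·∇)u = ∇(|u|²/2) - ω (u₂, -u₁)`, the equations say
`∇Φ = νΔu + ω (u₂, -u₁)`, and for a divergence-free planar field `Δu = (-∂₂ω, ∂₁ω)`. Hence
`∇Φ = ν (-∂₂ω, ∂₁ω) + ω (u₂, -u₁)`. Taking the divergence, the `ν`-terms cancel by the symmetry of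
second derivatives of `ω`, leaving `ΔΦ = ω² + u₂ ∂₁ω - u₁ ∂₂ω`; dotting with `u` instead, the
`ω`-terms cancel and `div (Φ u) = ∇Φ · u = ν (u₂ ∂₁ω - u₁ ∂₂ω)`.
-/

open Real

/-- Partial derivative in the first coordinate direction. -/
noncomputable def pdx (f : ℝ × ℝ → ℝ) : ℝ × ℝ → ℝ := fun x => fderiv ℝ f x (1, 0)

/-- Partial derivative in the second coordinate direction. -/
noncomputable def pdy (f : ℝ × ℝ → ℝ) : ℝ × ℝ → ℝ := fun x => fderiv ℝ f x (0, 1)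

open Filter Topology

noncomputable def laplacian (f : ℝ × ℝ → ℝ) : ℝ × ℝ → ℝ := fun x => pdx (pdx f) x + pdy (pdy f) x

noncomputable def vorticity (u1 u2 : ℝ × ℝ → ℝ) : ℝ × ℝ → ℝ := fun x => pdx u2 x - pdy u1 x

section Directional

variable {E : Type*} [NormedAddCommGroup E] [NormedSpace ℝ E] {x : E}

lemma fderiv_apply_add_eq_zero_of_eventually {f g : E → ℝ} (hf : DifferentiableAt ℝ f x)
    (hg : DifferentiableAt ℝ g x) (h : ∀ᶠ y in 𝓝 x, f y + g y = 0) (v : E) :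
    fderiv ℝ f x v + fderiv ℝ g x v = 0 := by
  have h' : (fun y => f y + g y) =ᶠ[𝓝 x] fun _ => (0 : ℝ) := h
  have hzero : fderiv ℝ (fun y => f y + g y) x = 0 := by
    rw [h'.fderiv_eq, fderiv_const_apply]
  simpa [fderiv_fun_add hf hg] using congrArg (· v) hzero

lemma fderiv_add_half_sq_add_sq_apply {p a b : E → ℝ} (hp : DifferentiableAt ℝ p x)
    (ha : DifferentiableAt ℝ a x) (hb : DifferentiableAt ℝ b x) (v : E) :
    fderiv ℝ (fun y => p y + 1 / 2 * (a y ^ 2 + b y ^ 2)) x v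
      = fderiv ℝ p x v + a x * fderiv ℝ a x v + b x * fderiv ℝ b x v := by
  have hd : HasFDerivAt (fun y => p y + 1 / 2 * (a y ^ 2 + b y ^ 2)) _ x :=
    hp.hasFDerivAt.add (((ha.hasFDerivAt.pow 2).add (hb.hasFDerivAt.pow 2)).const_mul (1 / 2))
  rw [hd.fderiv]
  simp only [one_div, Nat.add_one_sub_one, pow_one, nsmul_eq_mul, Nat.cast_ofNat, smul_add,
    add_apply, smul_apply, smul_eq_mul]
  ring

end Directional

section Partial

variable {f g : ℝ × ℝ → ℝ} {x : ℝ × ℝ}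

lemma pdx_sub (hf : DifferentiableAt ℝ f x) (hg : DifferentiableAt ℝ g x) :
    pdx (fun y => f y - g y) x = pdx f x - pdx g x := by
  simp [pdx, fderiv_fun_sub hf hg]

lemma pdy_sub (hf : DifferentiableAt ℝ f x) (hg : DifferentiableAt ℝ g x) :
    pdy (fun y => f y - g y) x = pdy f x - pdy g x := by
  simp [pdy, fderiv_fun_sub hf hg]

lemma pdx_mul (hf : DifferentiableAt ℝ f x) (hg : DifferentiableAt ℝ g x) :
    pdx (fun y => f y * g y) x = pdx f x * g x + f x * pdx g x := by
  simp only [pdx, fderiv_fun_mul hf hg, add_apply,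
    smul_apply, smul_eq_mul]
  ring

lemma pdy_mul (hf : DifferentiableAt ℝ f x) (hg : DifferentiableAt ℝ g x) :
    pdy (fun y => f y * g y) x = pdy f x * g x + f x * pdy g x := by
  simp only [pdy, fderiv_fun_mul hf hg, add_apply,
    smul_apply, smul_eq_mul]
  ring

lemma pdx_const_mul (hf : DifferentiableAt ℝ f x) (c : ℝ) :
    pdx (fun y => c * f y) x = c * pdx f x := by
  simp [pdx, fderiv_const_mul hf]

lemma pdy_const_mul (hf : DifferentiableAt ℝ f x) (c : ℝ) :
    pdy (fun y => c * f y) x = c * pdy f x := by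
  simp [pdy, fderiv_const_mul hf]

lemma Filter.EventuallyEq.pdx_eq (h : f =ᶠ[𝓝 x] g) : pdx f x = pdx g x := by
  simp only [pdx, h.fderiv_eq]

lemma Filter.EventuallyEq.pdy_eq (h : f =ᶠ[𝓝 x] g) : pdy f x = pdy g x := by
  simp only [pdy, h.fderiv_eq]

lemma ContDiffAt.contDiffAt_pdx {m n : WithTop ℕ∞} (hf : ContDiffAt ℝ n f x) (hmn : m + 1 ≤ n) :
    ContDiffAt ℝ m (pdx f) x :=
  (hf.fderiv_right hmn).clm_apply contDiffAt_const

lemma ContDiffAt.contDiffAt_pdy {m n : WithTop ℕ∞} (hf : ContDiffAt ℝ n f x) (hmn : m + 1 ≤ n) :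
    ContDiffAt ℝ m (pdy f) x :=
  (hf.fderiv_right hmn).clm_apply contDiffAt_const

lemma ContDiffAt.differentiableAt_pdx (hf : ContDiffAt ℝ 2 f x) :
    DifferentiableAt ℝ (pdx f) x :=
  (hf.contDiffAt_pdx (m := 1) (by norm_num)).differentiableAt one_ne_zero

lemma ContDiffAt.differentiableAt_pdy (hf : ContDiffAt ℝ 2 f x) :
    DifferentiableAt ℝ (pdy f) x :=
  (hf.contDiffAt_pdy (m := 1) (by norm_num)).differentiableAt one_ne_zero

lemma pdx_pdy_comm (hf : ContDiffAt ℝ 2 f x) : pdx (pdy f) x = pdy (pdx f) x := by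
  have hd : DifferentiableAt ℝ (fderiv ℝ f) x :=
    (hf.fderiv_right (m := 1) (by norm_num)).differentiableAt one_ne_zero
  have hsecond : ∀ v w : ℝ × ℝ,
      fderiv ℝ (fun y => fderiv ℝ f y w) x v = fderiv ℝ (fderiv ℝ f) x v w := by
    intro v w
    rw [fderiv_clm_apply hd (differentiableAt_const w)]
    simp
  change fderiv ℝ (fun y => fderiv ℝ f y (0, 1)) x (1, 0)
    = fderiv ℝ (fun y => fderiv ℝ f y (1, 0)) x (0, 1)
  rw [hsecond, hsecond]
  exact hf.isSymmSndFDerivAt (by simp) (1, 0) (0, 1)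

end Partial

section Plane

variable {x : ℝ × ℝ}

lemma laplacian_eq_of_divergence_free {u1 u2 : ℝ × ℝ → ℝ} (hu1 : ContDiffAt ℝ 2 u1 x)
    (hu2 : ContDiffAt ℝ 2 u2 x) (hdiv : ∀ᶠ y in 𝓝 x, pdx u1 y + pdy u2 y = 0) :
    laplacian u1 x = -pdy (vorticity u1 u2) x ∧ laplacian u2 x = pdx (vorticity u1 u2) x := by
  have hx := fderiv_apply_add_eq_zero_of_eventually hu1.differentiableAt_pdx
    hu2.differentiableAt_pdy hdiv (1, 0)
  have hy := fderiv_apply_add_eq_zero_of_eventually hu1.differentiableAt_pdx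
    hu2.differentiableAt_pdy hdiv (0, 1)
  change pdx (pdx u1) x + pdx (pdy u2) x = 0 at hx
  change pdy (pdx u1) x + pdy (pdy u2) x = 0 at hy
  have hω : vorticity u1 u2 = fun y => pdx u2 y - pdy u1 y := rfl
  simp only [laplacian, hω, pdx_sub hu2.differentiableAt_pdx hu1.differentiableAt_pdy,
    pdy_sub hu2.differentiableAt_pdx hu1.differentiableAt_pdy]
  constructor <;> linarith [pdx_pdy_comm hu1, pdx_pdy_comm hu2]

lemma grad_bernoulli_of_navierStokes {ν : ℝ} {u1 u2 p : ℝ × ℝ → ℝ}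
    (hu1 : ContDiffAt ℝ 2 u1 x) (hu2 : ContDiffAt ℝ 2 u2 x) (hp : DifferentiableAt ℝ p x)
    (hNS1 : -ν * laplacian u1 x + (u1 x * pdx u1 x + u2 x * pdy u1 x) + pdx p x = 0)
    (hNS2 : -ν * laplacian u2 x + (u1 x * pdx u2 x + u2 x * pdy u2 x) + pdy p x = 0)
    (hdiv : ∀ᶠ y in 𝓝 x, pdx u1 y + pdy u2 y = 0) :
    pdx (fun y => p y + 1 / 2 * (u1 y ^ 2 + u2 y ^ 2)) x
        = u2 x * vorticity u1 u2 x - ν * pdy (vorticity u1 u2) x ∧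
      pdy (fun y => p y + 1 / 2 * (u1 y ^ 2 + u2 y ^ 2)) x
        = ν * pdx (vorticity u1 u2) x - u1 x * vorticity u1 u2 x := by
  obtain ⟨hΔu1, hΔu2⟩ := laplacian_eq_of_divergence_free hu1 hu2 hdiv
  have hd1 := hu1.differentiableAt two_ne_zero
  have hd2 := hu2.differentiableAt two_ne_zero
  have hΦx : pdx (fun y => p y + 1 / 2 * (u1 y ^ 2 + u2 y ^ 2)) x
      = pdx p x + u1 x * pdx u1 x + u2 x * pdx u2 x :=
    fderiv_add_half_sq_add_sq_apply hp hd1 hd2 _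
  have hΦy : pdy (fun y => p y + 1 / 2 * (u1 y ^ 2 + u2 y ^ 2)) x
      = pdy p x + u1 x * pdy u1 x + u2 x * pdy u2 x :=
    fderiv_add_half_sq_add_sq_apply hp hd1 hd2 _
  simp only [hΦx, hΦy, vorticity]
  exact ⟨by linear_combination hNS1 + ν * hΔu1, by linear_combination hNS2 + ν * hΔu2⟩

lemma laplacian_eq_of_grad_eq {ν : ℝ} {Φ ω a b : ℝ × ℝ → ℝ} (hω : ContDiffAt ℝ 2 ω x)
    (ha : DifferentiableAt ℝ a x) (hb : DifferentiableAt ℝ b x)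
    (hΦx : ∀ᶠ y in 𝓝 x, pdx Φ y = b y * ω y - ν * pdy ω y)
    (hΦy : ∀ᶠ y in 𝓝 x, pdy Φ y = ν * pdx ω y - a y * ω y) :
    laplacian Φ x = (pdx b x - pdy a x) * ω x + (b x * pdx ω x - a x * pdy ω x) := by
  have hω1 := hω.differentiableAt two_ne_zero
  have hx : pdx Φ =ᶠ[𝓝 x] fun y => b y * ω y - ν * pdy ω y := hΦx
  have hy : pdy Φ =ᶠ[𝓝 x] fun y => ν * pdx ω y - a y * ω y := hΦy
  simp only [laplacian, hx.pdx_eq, hy.pdy_eq,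
    pdx_sub (hb.fun_mul hω1) (hω.differentiableAt_pdy.const_mul ν), pdx_mul hb hω1,
    pdx_const_mul hω.differentiableAt_pdy, pdy_sub (hω.differentiableAt_pdx.const_mul ν)
    (ha.fun_mul hω1), pdy_mul ha hω1, pdy_const_mul hω.differentiableAt_pdx, pdx_pdy_comm hω]
  ring

lemma pdx_mul_add_pdy_mul_of_div_eq_zero {Φ a b : ℝ × ℝ → ℝ} (hΦ : DifferentiableAt ℝ Φ x)
    (ha : DifferentiableAt ℝ a x) (hb : DifferentiableAt ℝ b x) (hdiv : pdx a x + pdy b x = 0) :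
    pdx (fun y => Φ y * a y) x + pdy (fun y => Φ y * b y) x = pdx Φ x * a x + pdy Φ x * b x := by
  rw [pdx_mul hΦ ha, pdy_mul hΦ hb]
  linear_combination Φ x * hdiv

end Plane

theorem stmt_7 (U : Set (ℝ × ℝ)) (hU : IsOpen U) (ν : ℝ) (hν : 0 < ν)
    (u : ℝ × ℝ → ℝ × ℝ) (p : ℝ × ℝ → ℝ)
    (hu : ContDiffOn ℝ 3 u U) (hp : ContDiffOn ℝ 3 p U)
    (u1 u2 : ℝ × ℝ → ℝ) (hu1 : u1 = fun x => (u x).1) (hu2 : u2 = fun x => (u x).2)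
    (hNS1 : ∀ x ∈ U, -ν * (pdx (pdx u1) x + pdy (pdy u1) x)
        + (u1 x * pdx u1 x + u2 x * pdy u1 x) + pdx p x = 0)
    (hNS2 : ∀ x ∈ U, -ν * (pdx (pdx u2) x + pdy (pdy u2) x)
        + (u1 x * pdx u2 x + u2 x * pdy u2 x) + pdy p x = 0)
    (hdiv : ∀ x ∈ U, pdx u1 x + pdy u2 x = 0)
    (ω Φ : ℝ × ℝ → ℝ)
    (hω : ω = fun x => pdx u2 x - pdy u1 x)
    (hΦ : Φ = fun x => p x + (1/2) * (u1 x ^ 2 + u2 x ^ 2)) :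
    ∀ x ∈ U, pdx (pdx Φ) x + pdy (pdy Φ) x =
      ω x ^ 2 + (1/ν) * (pdx (fun y => Φ y * u1 y) x + pdy (fun y => Φ y * u2 y) x) := by
  have hvort : ω = vorticity u1 u2 := hω
  subst hvort
  have hsmooth : ∀ y ∈ U, ContDiffAt ℝ 3 u1 y ∧ ContDiffAt ℝ 3 u2 y ∧ DifferentiableAt ℝ p y :=
    fun y hy => ⟨hu1 ▸ (hu.contDiffAt (hU.mem_nhds hy)).fst,
      hu2 ▸ (hu.contDiffAt (hU.mem_nhds hy)).snd,
      (hp.contDiffAt (hU.mem_nhds hy)).differentiableAt (by norm_num)⟩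
  have hgrad : ∀ y ∈ U, pdx Φ y = u2 y * vorticity u1 u2 y - ν * pdy (vorticity u1 u2) y ∧
      pdy Φ y = ν * pdx (vorticity u1 u2) y - u1 y * vorticity u1 u2 y := by
    intro y hy
    obtain ⟨hu1y, hu2y, hpy⟩ := hsmooth y hy
    subst hΦ
    exact grad_bernoulli_of_navierStokes (hu1y.of_le (by norm_num)) (hu2y.of_le (by norm_num))
      hpy (hNS1 y hy) (hNS2 y hy) (eventually_of_mem (hU.mem_nhds hy) hdiv)
  intro x hx
  obtain ⟨hu1x, hu2x, hpx⟩ := hsmooth x hx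
  have hd1 := hu1x.differentiableAt (by norm_num)
  have hd2 := hu2x.differentiableAt (by norm_num)
  have hωx : ContDiffAt ℝ 2 (vorticity u1 u2) x :=
    (hu2x.contDiffAt_pdx (by norm_num)).sub (hu1x.contDiffAt_pdy (by norm_num))
  have hΦx : DifferentiableAt ℝ Φ x := by subst hΦ; fun_prop
  have hlap := laplacian_eq_of_grad_eq hωx hd1 hd2
    (eventually_of_mem (hU.mem_nhds hx) fun y hy => (hgrad y hy).1)
    (eventually_of_mem (hU.mem_nhds hx) fun y hy => (hgrad y hy).2)
  change laplacian Φ x = _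
  rw [hlap, pdx_mul_add_pdy_mul_of_div_eq_zero hΦx hd1 hd2 (hdiv x hx), (hgrad x hx).1,
    (hgrad x hx).2, show pdx u2 x - pdy u1 x = vorticity u1 u2 x from rfl]
  field_simp
  ring
end
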